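/- Finite candidate set for the continuous best shift move: let l_j ≤ u_j be variable bounds with l_j ≤ x̄_j ≤ u_j, and let F := ({t_{ij} : a_{ij} ≠ 0} ∩ [l_j, u_j]) ∪ {l_j, u_j, x̄_j}. Then the score attains its maximum over [l_j, u_j] at a point of F; that is, there exists z ∈ F such that s_j(z, x̄) ≥ s_j(x̂_j, x̄) for every x̂_j ∈ [l_j, u_j]. -/

import Mathlib

open Finset

/-- Activity of constraint `i` at the incumbent point `xbar`. -/
noncomputable def activity {m n : ℕ} (a : Fin m → Fin n → ℝ) (xbar : Fin n → ℝ)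
    (i : Fin m) : ℝ :=
  ∑ k, a i k * xbar k

/-- Moved activity of constraint `i` when variable `j` takes candidate value `xhat`. -/
noncomputable def movedActivity {m n : ℕ} (a : Fin m → Fin n → ℝ) (xbar : Fin n → ℝ)
    (j : Fin n) (i : Fin m) (xhat : ℝ) : ℝ :=
  (∑ k ∈ Finset.univ.erase j, a i k * xbar k) + a i j * xhat

/-- Penalty of moving variable `j` from `xbar j` to `xhat` w.r.t. constraint `i`. -/
noncomputable def penalty {m n : ℕ} (a : Fin m → Fin n → ℝ) (b w : Fin m → ℝ)
    (xbar : Fin n → ℝ) (j : Fin n) (i : Fin m) (xhat : ℝ) : ℝ :=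
  if activity a xbar i ≤ b i ∧ movedActivity a xbar j i xhat > b i then -w i
  else if activity a xbar i > b i ∧ movedActivity a xbar j i xhat ≤ b i then w i
  else if activity a xbar i > b i ∧ movedActivity a xbar j i xhat > b i ∧
      movedActivity a xbar j i xhat < activity a xbar i then w i / 2
  else if activity a xbar i > b i ∧ movedActivity a xbar j i xhat > b i ∧
      movedActivity a xbar j i xhat > activity a xbar i then -w i / 2
  else 0

/-- Score of moving variable `j` to candidate value `xhat`. -/
noncomputable def score {m n : ℕ} (a : Fin m → Fin n → ℝ) (b w : Fin m → ℝ)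
    (xbar : Fin n → ℝ) (j : Fin n) (xhat : ℝ) : ℝ :=
  ∑ i, penalty a b w xbar j i xhat

/-- Breakpoint of constraint `i` for variable `j` (meaningful when `a i j ≠ 0`). -/
noncomputable def breakpoint {m n : ℕ} (a : Fin m → Fin n → ℝ) (b : Fin m → ℝ)
    (xbar : Fin n → ℝ) (j : Fin n) (i : Fin m) : ℝ :=
  (b i - ∑ k ∈ Finset.univ.erase j, a i k * xbar k) / a i j

/-! Since `y_{ij} - b_i = a_{ij} (x̂_j - t_{ij})` and `y_{ij} - ȳ_i = a_{ij} (x̂_j - x̄_j)`, each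
penalty depends on `x̂_j` only through the signs of `x̂_j - t_{ij}` and `x̂_j - x̄_j`, so the score is
constant between consecutive points of `F`. At an endpoint `e ≠ x̄_j` of such an interval only the
sign of `y_{ij} - b_i` can change, and it becomes `0`: constraint `i` becomes satisfied, the better
side for its penalty. Hence the score at `e` dominates the score on the interval, and of the two
endpoints around a point `x̂_j ∉ F` at most one is `x̄_j`. -/

theorem sign_sub_eq_of_notMem_uIcc {α : Type*} [AddCommGroup α] [LinearOrder α]
    [IsOrderedAddMonoid α] {p x e : α} (h : p ∉ Set.uIcc e x) :
    SignType.sign (x - p) = SignType.sign (e - p) := by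
  simp only [Set.mem_uIcc, not_or, not_and, not_le] at h
  rcases lt_or_ge p x with hpx | hxp
  · have hpe : p < e := lt_of_not_ge fun hep => (h.1 hep).not_gt hpx
    rw [sign_pos (sub_pos.2 hpx), sign_pos (sub_pos.2 hpe)]
  · have hep : e < p := h.2 hxp
    rw [sign_neg (sub_neg.2 (h.1 hep.le)), sign_neg (sub_neg.2 hep)]

section Move

variable {m n : ℕ} (a : Fin m → Fin n → ℝ) (b w : Fin m → ℝ) (xbar : Fin n → ℝ) (j : Fin n)
  (i : Fin m)

theorem movedActivity_sub_movedActivity (x y : ℝ) :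
    movedActivity a xbar j i x - movedActivity a xbar j i y = a i j * (x - y) := by
  simp only [movedActivity]
  ring

theorem movedActivity_self : movedActivity a xbar j i (xbar j) = activity a xbar i := by
  rw [activity, ← Finset.sum_erase_add _ _ (Finset.mem_univ j), movedActivity]

theorem movedActivity_breakpoint (ha : a i j ≠ 0) :
    movedActivity a xbar j i (breakpoint a b xbar j i) = b i := by
  rw [movedActivity, breakpoint, mul_div_cancel₀ _ ha]
  ring

theorem sign_movedActivity_sub (x p : ℝ) :
    SignType.sign (movedActivity a xbar j i x - movedActivity a xbar j i p) =
      SignType.sign (a i j) * SignType.sign (x - p) := by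
  rw [movedActivity_sub_movedActivity, sign_mul]

theorem penalty_le_of_movedActivity_le (hw : 0 ≤ w i) {e : ℝ}
    (he : movedActivity a xbar j i e ≤ b i) (x : ℝ) :
    penalty a b w xbar j i x ≤ penalty a b w xbar j i e := by
  unfold penalty
  split_ifs <;> first | linarith | tauto

theorem penalty_eq_of_sign_eq {x e : ℝ}
    (hb : SignType.sign (movedActivity a xbar j i x - b i) =
      SignType.sign (movedActivity a xbar j i e - b i))
    (hact : SignType.sign (movedActivity a xbar j i x - activity a xbar i) =
      SignType.sign (movedActivity a xbar j i e - activity a xbar i)) :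
    penalty a b w xbar j i x = penalty a b w xbar j i e := by
  have cmp : ∀ {c y y' : ℝ}, SignType.sign (y - c) = SignType.sign (y' - c) →
      (c < y ↔ c < y') ∧ (y < c ↔ y' < c) := by
    intro c y y' h
    constructor
    · rw [← sub_pos, ← sign_eq_one_iff, h, sign_eq_one_iff, sub_pos]
    · rw [← sub_neg, ← sign_eq_neg_one_iff, h, sign_eq_neg_one_iff, sub_neg]
  simp only [penalty, gt_iff_lt, ← not_lt, (cmp hb).1, (cmp hact).1, (cmp hact).2]

theorem penalty_le_of_notMem_uIcc (hw : 0 ≤ w i) {x e : ℝ}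
    (hxbar : xbar j ∉ Set.uIcc e x)
    (hbp : a i j ≠ 0 → breakpoint a b xbar j i ∈ Set.uIcc e x → breakpoint a b xbar j i = e) :
    penalty a b w xbar j i x ≤ penalty a b w xbar j i e := by
  by_cases he : movedActivity a xbar j i e ≤ b i
  · exact penalty_le_of_movedActivity_le a b w xbar j i hw he x
  refine (penalty_eq_of_sign_eq a b w xbar j i ?_ ?_).le
  · by_cases ha : a i j = 0
    · have hxe := movedActivity_sub_movedActivity a xbar j i x e
      rw [ha, zero_mul, sub_eq_zero] at hxe
      rw [hxe]
    have hbp' : breakpoint a b xbar j i ∉ Set.uIcc e x := fun hmem =>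
      he (hbp ha hmem ▸ (movedActivity_breakpoint a b xbar j i ha).le)
    rw [← movedActivity_breakpoint a b xbar j i ha, sign_movedActivity_sub,
      sign_movedActivity_sub, sign_sub_eq_of_notMem_uIcc hbp']
  · rw [← movedActivity_self, sign_movedActivity_sub, sign_movedActivity_sub,
      sign_sub_eq_of_notMem_uIcc hxbar]

theorem score_le_of_notMem_uIcc (hw : ∀ i, 0 ≤ w i) {x e : ℝ} (hxbar : xbar j ∉ Set.uIcc e x)
    (hbp : ∀ i, a i j ≠ 0 → breakpoint a b xbar j i ∈ Set.uIcc e x →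
      breakpoint a b xbar j i = e) :
    score a b w xbar j x ≤ score a b w xbar j e :=
  Finset.sum_le_sum fun i _ => penalty_le_of_notMem_uIcc a b w xbar j i (hw i) hxbar (hbp i)

end Move

namespace Finset

variable {α : Type*} [LinearOrder α] {S : Finset α} {s x : α}

theorem exists_nearest_below (hs : s ∈ S) (hsx : s < x) (hx : x ∉ S) :
    ∃ c ∈ S, s ≤ c ∧ c < x ∧ ∀ p ∈ S, p ∈ Set.Icc c x → p = c := by
  obtain ⟨c, hc, hmax⟩ := (S.filter (· < x)).exists_max_image id ⟨s, mem_filter.2 ⟨hs, hsx⟩⟩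
  rw [mem_filter] at hc
  refine ⟨c, hc.1, hmax s (mem_filter.2 ⟨hs, hsx⟩), hc.2, fun p hp hpI => ?_⟩
  have hpx : p < x := hpI.2.lt_of_ne fun h => hx (h ▸ hp)
  exact le_antisymm (hmax p (mem_filter.2 ⟨hp, hpx⟩)) hpI.1

theorem exists_nearest_above (hs : s ∈ S) (hxs : x < s) (hx : x ∉ S) :
    ∃ d ∈ S, x < d ∧ d ≤ s ∧ ∀ p ∈ S, p ∈ Set.Icc x d → p = d := by
  obtain ⟨d, hd, hmin⟩ := (S.filter (x < ·)).exists_min_image id ⟨s, mem_filter.2 ⟨hs, hxs⟩⟩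
  rw [mem_filter] at hd
  refine ⟨d, hd.1, hd.2, hmin s (mem_filter.2 ⟨hs, hxs⟩), fun p hp hpI => ?_⟩
  have hxp : x < p := hpI.1.lt_of_ne fun h => hx (h ▸ hp)
  exact le_antisymm hpI.2 (hmin p (mem_filter.2 ⟨hp, hxp⟩))

end Finset

section Candidates

variable {m n : ℕ} (a : Fin m → Fin n → ℝ) (b w : Fin m → ℝ) (xbar : Fin n → ℝ) (j : Fin n)
  (l u : ℝ)

noncomputable def candidates : Finset ℝ :=
  ((univ.filter fun i => a i j ≠ 0).image (breakpoint a b xbar j)).filter (· ∈ Set.Icc l u) ∪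
    {l, u, xbar j}

theorem coe_candidates :
    (candidates a b xbar j l u : Set ℝ) =
      ({t : ℝ | ∃ i : Fin m, a i j ≠ 0 ∧ t = breakpoint a b xbar j i} ∩ Set.Icc l u) ∪
        {l, u, xbar j} := by
  ext t
  simp [candidates, eq_comm]

theorem exists_mem_candidates_score_le (hw : ∀ i, 0 ≤ w i) {x : ℝ} (hx : x ∈ Set.Icc l u) :
    ∃ e ∈ candidates a b xbar j l u, score a b w xbar j x ≤ score a b w xbar j e := by
  set C := candidates a b xbar j l u
  by_cases hxC : x ∈ C
  · exact ⟨x, hxC, le_rfl⟩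
  have hlC : l ∈ C := by simp [C, candidates]
  have huC : u ∈ C := by simp [C, candidates]
  have hxbarC : xbar j ∈ C := by simp [C, candidates]
  have hbpC : ∀ i, a i j ≠ 0 → breakpoint a b xbar j i ∈ Set.Icc l u →
      breakpoint a b xbar j i ∈ C := fun i ha hI => by
    simp only [C, candidates, mem_union, mem_filter, mem_image, mem_univ, true_and]
    exact Or.inl ⟨⟨i, ha, rfl⟩, hI⟩
  have score_le_of_gap : ∀ e ∈ Set.Icc l u, e ≠ xbar j → (∀ p ∈ C, p ∈ Set.uIcc e x → p = e) →
      score a b w xbar j x ≤ score a b w xbar j e := fun e heI hexbar hgap =>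
    score_le_of_notMem_uIcc a b w xbar j hw (fun hmem => hexbar (hgap _ hxbarC hmem).symm)
      fun i ha hmem => hgap _ (hbpC i ha (Set.uIcc_subset_Icc heI hx hmem)) hmem
  obtain ⟨c, hcC, hlc, hcx, hc⟩ :=
    exists_nearest_below hlC (hx.1.lt_of_ne fun h => hxC (h ▸ hlC)) hxC
  obtain ⟨d, hdC, hxd, hdu, hd⟩ :=
    exists_nearest_above huC (hx.2.lt_of_ne fun h => hxC (h ▸ huC)) hxC
  by_cases hc_xbar : c = xbar j
  · refine ⟨d, hdC, score_le_of_gap d ⟨hx.1.trans hxd.le, hdu⟩ (by rintro rfl; linarith) ?_⟩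
    rwa [Set.uIcc_of_ge hxd.le]
  · refine ⟨c, hcC, score_le_of_gap c ⟨hlc, hcx.le.trans hx.2⟩ hc_xbar ?_⟩
    rwa [Set.uIcc_of_le hcx.le]

end Candidates

theorem best_shift_attained_on_candidate_set_general
    {m n : ℕ} (a : Fin m → Fin n → ℝ) (b w : Fin m → ℝ)
    (xbar : Fin n → ℝ) (j : Fin n) (hw : ∀ i, 0 ≤ w i)
    (l u : ℝ) :
    ∃ z ∈ ({t : ℝ | ∃ i : Fin m, a i j ≠ 0 ∧ t = breakpoint a b xbar j i} ∩
        Set.Icc l u) ∪ {l, u, xbar j},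
      ∀ xhat ∈ Set.Icc l u, score a b w xbar j xhat ≤ score a b w xbar j z := by
  obtain ⟨z, hz, hmax⟩ := (candidates a b xbar j l u).exists_max_image (score a b w xbar j)
    ⟨l, by simp [candidates]⟩
  refine ⟨z, coe_candidates a b xbar j l u ▸ mem_coe.2 hz, fun x hx => ?_⟩
  obtain ⟨e, he, hle⟩ := exists_mem_candidates_score_le a b w xbar j l u hw hx
  exact hle.trans (hmax e he)

/-- Finite candidate set for the continuous best shift move: the score attains its
maximum over `[l, u]` at a breakpoint within the bounds, at a bound, or at the incumbent. -/
theorem best_shift_attained_on_candidate_set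
    {m n : ℕ} (a : Fin m → Fin n → ℝ) (b w : Fin m → ℝ)
    (xbar : Fin n → ℝ) (j : Fin n) (hw : ∀ i, 0 ≤ w i)
    (l u : ℝ) (hlu : l ≤ u) (hl : l ≤ xbar j) (hu : xbar j ≤ u) :
    ∃ z ∈ ({t : ℝ | ∃ i : Fin m, a i j ≠ 0 ∧ t = breakpoint a b xbar j i} ∩
        Set.Icc l u) ∪ {l, u, xbar j},
      ∀ xhat ∈ Set.Icc l u, score a b w xbar j xhat ≤ score a b w xbar j z :=
  best_shift_attained_on_candidate_set_general a b w xbar j hw l u
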